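/- Let d = 2 or d = 3 and let σ > 0 satisfy σ < 2/(d−2) when d = 3 (no upper restriction when d = 2). Then there exists a constant C = C(d,σ) > 0 such that for every Schwartz function u : ℝ^d → ℂ one has ∫_{ℝ^d} |u|^{2σ+2} dx ≤ C · (∫_{ℝ^d} |∇u|² dx)^{dσ/2} · (∫_{ℝ^d} |u|² dx)^{(σ(2−d)+2)/2} (Gagliardo–Nirenberg inequality). -/

import Mathlib

open MeasureTheory Real Complex Filter

/-!
The Gagliardo–Nirenberg–Sobolev inequality for compactly supported functions extends to `C¹`
functions in `L^p` by cutting off with `φ (x / m)` and applying Fatou's lemma as `m → ∞`.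

In dimension 3, Sobolev's `‖u‖₆ ≤ C ‖∇u‖₂` is the case `σ = 2`. In dimension 2, the `L¹ → L²`
Sobolev inequality applied to `|u|^{σ+1}` and Cauchy–Schwarz give
`∫|u|^{2σ+2} ≤ C ∫|u|^{2σ} ∫|∇u|²` (Ladyzhenskaya); for `σ ≥ 1`, Hölder bounds `∫|u|^{2σ}` by
powers of `∫|u|^{2σ+2}` and `∫|u|²`, and since `∫|u|^{2σ+2}` is finite its power can be absorbed
into the left-hand side. Every smaller `σ > 0` then follows by Hölder interpolation between `L²`
and the endpoint case.
-/

open Module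
open scoped ENNReal NNReal Topology SchwartzMap

section Sobolev

variable {E F : Type*} [NormedAddCommGroup E] [NormedSpace ℝ E]
  [NormedAddCommGroup F] [NormedSpace ℝ F]

lemma norm_fderiv_smul_le_of_abs_le_one {φ : E → ℝ} {w : E → F} {x : E}
    (hφ : DifferentiableAt ℝ φ x) (hw : DifferentiableAt ℝ w x) (hφ1 : |φ x| ≤ 1) :
    ‖fderiv ℝ (fun y => φ y • w y) x‖ ≤ ‖fderiv ℝ w x‖ + ‖fderiv ℝ φ x‖ * ‖w x‖ := by
  rw [fderiv_fun_smul hφ hw]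
  refine (norm_add_le _ _).trans (add_le_add ?_ (ContinuousLinearMap.norm_smulRight_apply _ _).le)
  rw [norm_smul, Real.norm_eq_abs]
  exact mul_le_of_le_one_left (norm_nonneg _) hφ1

variable [MeasurableSpace E] [BorelSpace E]

lemma eLpNorm_fderiv_smul_comp_smul_le {φ : E → ℝ} {w : E → F} (hφ : ContDiff ℝ 1 φ)
    (hw : ContDiff ℝ 1 w) (hφ1 : ∀ x, |φ x| ≤ 1) {K : ℝ} (hK : ∀ x, ‖fderiv ℝ φ x‖ ≤ K)
    {c : ℝ} (hc : 0 ≤ c) {p : ℝ≥0∞} (hp : 1 ≤ p) (μ : Measure E) :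
    eLpNorm (fderiv ℝ (fun y => φ (c • y) • w y)) p μ ≤
      eLpNorm (fderiv ℝ w) p μ + ENNReal.ofReal (K * c) * eLpNorm w p μ := by
  have hφc : ContDiff ℝ 1 (fun y => φ (c • y)) := hφ.comp (contDiff_const_smul c)
  have hpt : ∀ x, ‖fderiv ℝ (fun y => φ (c • y) • w y) x‖ ≤
      ‖fderiv ℝ w x‖ + (K * c) * ‖w x‖ := by
    intro x
    refine (norm_fderiv_smul_le_of_abs_le_one (hφc.differentiable one_ne_zero x)
      (hw.differentiable one_ne_zero x) (hφ1 _)).trans (add_le_add_right ?_ _)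
    rw [fderiv_comp_smul, norm_smul, Real.norm_of_nonneg hc, mul_comm c]
    gcongr
    exact hK _
  calc eLpNorm (fderiv ℝ (fun y => φ (c • y) • w y)) p μ
      ≤ eLpNorm ((fun x => ‖fderiv ℝ w x‖) + (K * c) • fun x => ‖w x‖) p μ :=
        eLpNorm_mono_real fun x => by simpa using hpt x
    _ ≤ eLpNorm (fun x => ‖fderiv ℝ w x‖) p μ + eLpNorm ((K * c) • fun x => ‖w x‖) p μ :=
        eLpNorm_add_le (hw.continuous_fderiv one_ne_zero).norm.aestronglyMeasurable
          ((hw.continuous.norm.const_smul _).aestronglyMeasurable) hp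
    _ = eLpNorm (fderiv ℝ w) p μ + ENNReal.ofReal (K * c) * eLpNorm w p μ := by
        rw [eLpNorm_const_smul, eLpNorm_norm, eLpNorm_norm,
          Real.enorm_eq_ofReal (mul_nonneg ((norm_nonneg _).trans (hK 0)) hc)]

variable [FiniteDimensional ℝ E] [FiniteDimensional ℝ F]

/-- `eLpNorm_le_eLpNorm_fderiv_of_eq` without the compact support assumption. -/
theorem eLpNorm_le_eLpNorm_fderiv_of_eq_of_ne_top (μ : Measure E) [μ.IsAddHaarMeasure]
    {w : E → F} (hw : ContDiff ℝ 1 w) {p p' : ℝ≥0} (hp : 1 ≤ p) (hn : 0 < finrank ℝ E)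
    (hp' : (p' : ℝ)⁻¹ = p⁻¹ - (finrank ℝ E : ℝ)⁻¹) (hwp : eLpNorm w p μ ≠ ⊤) :
    eLpNorm w p' μ ≤ SNormLESNormFDerivOfEqConst F μ p * eLpNorm (fderiv ℝ w) p μ := by
  set C : ℝ≥0∞ := (SNormLESNormFDerivOfEqConst F μ p : ℝ≥0∞)
  let φ : ContDiffBump (0 : E) := ⟨1, 2, one_pos, one_lt_two⟩
  have hφ : ContDiff ℝ 1 φ := φ.contDiff
  obtain ⟨K, hK⟩ := (φ.hasCompactSupport.fderiv ℝ).exists_bound_of_continuous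
    (hφ.continuous_fderiv one_ne_zero)
  have hφ1 : ∀ x, |φ x| ≤ 1 := fun x => abs_le.2 ⟨by linarith [φ.nonneg (x := x)], φ.le_one⟩
  let v : ℕ → E → F := fun m y => φ ((m : ℝ)⁻¹ • y) • w y
  have hv_lim : ∀ y, Tendsto (fun m => v m y) atTop (𝓝 (w y)) := by
    intro y
    have : Tendsto (fun m : ℕ => φ ((m : ℝ)⁻¹ • y)) atTop (𝓝 (φ ((0 : ℝ) • y))) :=
      (φ.continuous.comp (continuous_id.smul continuous_const)).continuousAt.tendsto.comp
        tendsto_inv_atTop_nhds_zero_nat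
    simpa [φ.one_of_mem_closedBall (Metric.mem_closedBall_self zero_le_one)] using
      this.smul_const (w y)
  have hv_bound : ∀ m : ℕ, 0 < m → eLpNorm (v m) p' μ ≤
      C * (eLpNorm (fderiv ℝ w) p μ + ENNReal.ofReal (K * (m : ℝ)⁻¹) * eLpNorm w p μ) := by
    intro m hm
    have hc : (m : ℝ)⁻¹ ≠ 0 := by positivity
    have hvm : ContDiff ℝ 1 (v m) := (hφ.comp (contDiff_const_smul _)).smul hw
    calc eLpNorm (v m) p' μ ≤ C * eLpNorm (fderiv ℝ (v m)) p μ :=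
          eLpNorm_le_eLpNorm_fderiv_of_eq μ hvm
            ((φ.hasCompactSupport.comp_smul hc).smul_right) hp hn hp'
      _ ≤ _ := by
          gcongr
          exact eLpNorm_fderiv_smul_comp_smul_le hφ hw hφ1 hK (by positivity)
            (by exact_mod_cast hp) μ
  have hrhs : Tendsto (fun m : ℕ =>
      C * (eLpNorm (fderiv ℝ w) p μ + ENNReal.ofReal (K * (m : ℝ)⁻¹) * eLpNorm w p μ))
      atTop (𝓝 (C * eLpNorm (fderiv ℝ w) p μ)) := by
    have h0 : Tendsto (fun m : ℕ => ENNReal.ofReal (K * (m : ℝ)⁻¹)) atTop (𝓝 0) := by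
      simpa using ENNReal.tendsto_ofReal
        (tendsto_inv_atTop_nhds_zero_nat.const_mul K)
    simpa using ENNReal.Tendsto.const_mul
      (tendsto_const_nhds.add (ENNReal.Tendsto.mul_const h0 (Or.inr hwp)))
      (Or.inr ENNReal.coe_ne_top)
  calc eLpNorm w p' μ ≤ atTop.liminf fun m => eLpNorm (v m) p' μ :=
        Lp.eLpNorm_lim_le_liminf_eLpNorm
          (fun m => ((hφ.continuous.comp (continuous_const_smul _)).smul
            hw.continuous).aestronglyMeasurable) w (ae_of_all _ hv_lim)
    _ ≤ atTop.liminf fun m : ℕ =>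
          C * (eLpNorm (fderiv ℝ w) p μ + ENNReal.ofReal (K * (m : ℝ)⁻¹) * eLpNorm w p μ) :=
        liminf_le_liminf ((eventually_gt_atTop 0).mono hv_bound)
    _ = C * eLpNorm (fderiv ℝ w) p μ := hrhs.liminf_eq

end Sobolev

section Lintegral

variable {α : Type*} [MeasurableSpace α] {μ : Measure α}

lemma lintegral_rpow_convex_comb_le {g : α → ℝ≥0∞} (hg : AEMeasurable g μ) {a b θ : ℝ}
    (ha : 0 ≤ a) (hb : 0 ≤ b) (hθ0 : 0 ≤ θ) (hθ1 : θ ≤ 1) :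
    ∫⁻ x, g x ^ (θ * a + (1 - θ) * b) ∂μ
      ≤ (∫⁻ x, g x ^ a ∂μ) ^ θ * (∫⁻ x, g x ^ b ∂μ) ^ (1 - θ) := by
  have hθ1' : 0 ≤ 1 - θ := by linarith
  calc ∫⁻ x, g x ^ (θ * a + (1 - θ) * b) ∂μ
      = ∫⁻ x, (g x ^ a) ^ θ * (g x ^ b) ^ (1 - θ) ∂μ := by
        congr! 2 with x
        rw [← ENNReal.rpow_mul, ← ENNReal.rpow_mul, ← ENNReal.rpow_add_of_nonneg _ _
          (by positivity) (by positivity), mul_comm a, mul_comm b]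
    _ ≤ _ := ENNReal.lintegral_mul_norm_pow_le (hg.pow_const a) (hg.pow_const b) hθ0 hθ1'
        (by ring)

lemma integral_norm_rpow_eq_toReal_lintegral {F : Type*} [NormedAddCommGroup F] {f : α → F}
    (hf : AEStronglyMeasurable f μ) {q : ℝ} (hq : 0 ≤ q) :
    ∫ x, ‖f x‖ ^ q ∂μ = (∫⁻ x, ‖f x‖ₑ ^ q ∂μ).toReal := by
  rw [integral_eq_lintegral_of_nonneg_ae (ae_of_all _ fun x => by positivity)
    (hf.norm.aemeasurable.pow_const q).aestronglyMeasurable]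
  congr 1
  refine lintegral_congr fun x => ?_
  rw [← ENNReal.ofReal_rpow_of_nonneg (norm_nonneg _) hq, ofReal_norm]

end Lintegral

lemma ENNReal.le_rpow_of_le_mul_rpow {X A : ℝ≥0∞} {θ : ℝ} (hX : X ≠ ⊤) (hθ : θ < 1)
    (h : X ≤ A * X ^ θ) : X ≤ A ^ (1 - θ)⁻¹ := by
  rcases eq_or_ne X 0 with rfl | hX0
  · exact zero_le
  have hXθ0 : X ^ θ ≠ 0 := by simp [ENNReal.rpow_eq_zero_iff, hX0, hX]
  have hXθ : X ^ θ ≠ ⊤ := by simp [ENNReal.rpow_eq_top_iff, hX0, hX]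
  have key : X ^ (1 - θ) ≤ A := by
    rw [← ENNReal.mul_le_mul_iff_left hXθ0 hXθ, ← ENNReal.rpow_add _ _ hX0 hX, sub_add_cancel,
      ENNReal.rpow_one]
    exact h
  calc X = (X ^ (1 - θ)) ^ (1 - θ)⁻¹ := by
        rw [← ENNReal.rpow_mul, mul_inv_cancel₀ (by linarith), ENNReal.rpow_one]
    _ ≤ A ^ (1 - θ)⁻¹ := ENNReal.rpow_le_rpow key (by simp only [inv_nonneg]; linarith)

lemma SchwartzMap.lintegral_enorm_rpow_ne_top {E F : Type*} [NormedAddCommGroup E]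
    [NormedSpace ℝ E] [MeasurableSpace E] [BorelSpace E] [NormedAddCommGroup F] [NormedSpace ℝ F]
    (f : 𝓢(E, F)) (μ : Measure E) [μ.HasTemperateGrowth] {r : ℝ} (hr : 0 < r) :
    ∫⁻ x, ‖f x‖ₑ ^ r ∂μ ≠ ⊤ := by
  simpa [ENNReal.toReal_ofReal hr.le] using (lintegral_rpow_enorm_lt_top_of_eLpNorm_lt_top
    (p := ENNReal.ofReal r) (by simpa using hr) ENNReal.ofReal_ne_top (f.eLpNorm_lt_top _ μ)).ne

section GagliardoNirenberg

variable {E F : Type*} [NormedAddCommGroup E] [NormedSpace ℝ E] [MeasurableSpace E]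
  [NormedAddCommGroup F] (μ : Measure E)

variable (F) in
/-- Stated with lower Lebesgue integrals, which unlike Bochner integrals take no junk values. -/
def GagliardoNirenbergAt [NormedSpace ℝ F] (σ : ℝ) (C : ℝ≥0) : Prop :=
  ∀ u : 𝓢(E, F), ∫⁻ x, ‖u x‖ₑ ^ (2 * σ + 2) ∂μ ≤
    C * (∫⁻ x, ‖fderiv ℝ u x‖ₑ ^ (2 : ℝ) ∂μ) ^ ((finrank ℝ E : ℝ) * σ / 2)
      * (∫⁻ x, ‖u x‖ₑ ^ (2 : ℝ) ∂μ) ^ ((σ * (2 - finrank ℝ E) + 2) / 2)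

variable [BorelSpace E]

theorem GagliardoNirenbergAt.of_le [NormedSpace ℝ F] {σ₀ σ : ℝ} {C : ℝ≥0}
    (h : GagliardoNirenbergAt F μ σ₀ C) (hσ : 0 < σ) (hσσ₀ : σ ≤ σ₀)
    (hσ₀ : 0 ≤ σ₀ * (2 - finrank ℝ E) + 2) :
    GagliardoNirenbergAt F μ σ (C ^ (σ / σ₀)) := by
  intro u
  set d : ℝ := (finrank ℝ E : ℝ)
  have hσ₀0 : 0 < σ₀ := hσ.trans_le hσσ₀
  set θ := σ / σ₀
  have hθ0 : 0 ≤ θ := by positivity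
  have hθ1 : θ ≤ 1 := div_le_one_of_le₀ hσσ₀ hσ₀0.le
  set J := ∫⁻ x, ‖u x‖ₑ ^ (2 : ℝ) ∂μ
  set G := ∫⁻ x, ‖fderiv ℝ u x‖ₑ ^ (2 : ℝ) ∂μ
  calc ∫⁻ x, ‖u x‖ₑ ^ (2 * σ + 2) ∂μ
      = ∫⁻ x, ‖u x‖ₑ ^ (θ * (2 * σ₀ + 2) + (1 - θ) * 2) ∂μ := by
        congr! 3
        simp only [θ]
        field_simp
        ring
    _ ≤ (∫⁻ x, ‖u x‖ₑ ^ (2 * σ₀ + 2) ∂μ) ^ θ * J ^ (1 - θ) :=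
        lintegral_rpow_convex_comb_le u.continuous.enorm.aemeasurable (by linarith) zero_le_two
          hθ0 hθ1
    _ ≤ (C * G ^ (d * σ₀ / 2) * J ^ ((σ₀ * (2 - d) + 2) / 2)) ^ θ * J ^ (1 - θ) := by
        gcongr
        exact h u
    _ = _ := by
        rw [ENNReal.mul_rpow_of_nonneg _ _ hθ0, ENNReal.mul_rpow_of_nonneg _ _ hθ0,
          ← ENNReal.rpow_mul, ← ENNReal.rpow_mul, mul_assoc,
          ← ENNReal.rpow_add_of_nonneg _ _ (by positivity) (by linarith),
          ENNReal.coe_rpow_of_nonneg _ hθ0]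
        congr 3
        · simp only [θ]
          field_simp
        · simp only [θ]
          field_simp
          ring

variable [FiniteDimensional ℝ E] [μ.IsAddHaarMeasure]

/-- Ladyzhenskaya-type inequality: the Sobolev inequality with `p = 1` applied to `‖u‖ ^ s`,
followed by Cauchy–Schwarz. -/
theorem lintegral_enorm_rpow_two_mul_le_of_finrank_eq_two [InnerProductSpace ℝ F]
    (hE : finrank ℝ E = 2) {u : E → F} (hu : ContDiff ℝ 1 u) {s : ℝ} (hs : 1 < s)
    (hus : ∫⁻ x, ‖u x‖ₑ ^ s ∂μ ≠ ⊤) :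
    ∫⁻ x, ‖u x‖ₑ ^ (2 * s) ∂μ ≤
      ((SNormLESNormFDerivOfEqConst ℝ μ 1 : ℝ≥0∞) * ENNReal.ofReal s) ^ (2 : ℝ)
        * (∫⁻ x, ‖u x‖ₑ ^ (2 * (s - 1)) ∂μ) * ∫⁻ x, ‖fderiv ℝ u x‖ₑ ^ (2 : ℝ) ∂μ := by
  set C : ℝ≥0∞ := (SNormLESNormFDerivOfEqConst ℝ μ 1 : ℝ≥0∞)
  set v : E → ℝ := fun x => ‖u x‖ ^ s
  have hv_enorm : ∀ x, ‖v x‖ₑ = ‖u x‖ₑ ^ s := fun x => by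
    rw [Real.enorm_eq_ofReal (by positivity), ← ENNReal.ofReal_rpow_of_nonneg (norm_nonneg _)
      (by linarith), ofReal_norm]
  have hv_fderiv : ∀ x, ‖fderiv ℝ v x‖ₑ ≤
      ENNReal.ofReal s * ((‖u x‖ₑ ^ (2 * (s - 1))) ^ (2⁻¹ : ℝ) *
        (‖fderiv ℝ u x‖ₑ ^ (2 : ℝ)) ^ (2⁻¹ : ℝ)) := fun x => by
    rw [← ENNReal.rpow_mul, ← ENNReal.rpow_mul, show 2 * (s - 1) * 2⁻¹ = s - 1 by ring,
      mul_inv_cancel₀ two_ne_zero, ENNReal.rpow_one, ← ofReal_norm, ← ofReal_norm,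
      ← ofReal_norm, ENNReal.ofReal_rpow_of_nonneg (norm_nonneg _) (by linarith),
      ← ENNReal.ofReal_mul (by positivity), ← ENNReal.ofReal_mul (by linarith), ← mul_assoc]
    exact ENNReal.ofReal_le_ofReal (norm_fderiv_norm_rpow_le (hu.differentiable one_ne_zero) hs)
  have hsob := eLpNorm_le_eLpNorm_fderiv_of_eq_of_ne_top μ (w := v) (hu.norm_rpow hs)
    (p := 1) (p' := 2) le_rfl (by omega) (by rw [hE]; norm_num)
    (by simpa [eLpNorm_one_eq_lintegral_enorm, hv_enorm] using hus)
  rw [ENNReal.coe_one, NNReal.coe_one, eLpNorm_one_eq_lintegral_enorm] at hsob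
  calc ∫⁻ x, ‖u x‖ₑ ^ (2 * s) ∂μ = eLpNorm v (2 : ℝ≥0) μ ^ (2 : ℝ) := by
        have h := eLpNorm_nnreal_pow_eq_lintegral (f := v) (μ := μ) (p := 2) two_ne_zero
        rw [NNReal.coe_ofNat] at h
        simp_rw [h, hv_enorm, ← ENNReal.rpow_mul, mul_comm s]
    _ ≤ (C * ∫⁻ x, ‖fderiv ℝ v x‖ₑ ∂μ) ^ (2 : ℝ) := by gcongr
    _ ≤ (C * (ENNReal.ofReal s * ((∫⁻ x, ‖u x‖ₑ ^ (2 * (s - 1)) ∂μ) ^ (2⁻¹ : ℝ) *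
          (∫⁻ x, ‖fderiv ℝ u x‖ₑ ^ (2 : ℝ) ∂μ) ^ (2⁻¹ : ℝ)))) ^ (2 : ℝ) := by
        gcongr
        refine (lintegral_mono hv_fderiv).trans ?_
        rw [lintegral_const_mul' _ _ ENNReal.ofReal_ne_top]
        gcongr
        exact ENNReal.lintegral_mul_norm_pow_le (p := 2⁻¹) (q := 2⁻¹)
          (hu.continuous.enorm.aemeasurable.pow_const _)
          ((hu.continuous_fderiv one_ne_zero).enorm.aemeasurable.pow_const _)
          (by norm_num) (by norm_num) (by norm_num)
    _ = _ := by
        simp only [ENNReal.mul_rpow_of_nonneg _ _ zero_le_two, ← ENNReal.rpow_mul]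
        norm_num
        ring

theorem gagliardoNirenbergAt_two_of_finrank_eq_three [NormedSpace ℝ F] [FiniteDimensional ℝ F]
    (hE : finrank ℝ E = 3) :
    GagliardoNirenbergAt F μ 2 (SNormLESNormFDerivOfEqConst F μ 2 ^ 6) := by
  intro u
  have hsob := eLpNorm_le_eLpNorm_fderiv_of_eq_of_ne_top μ (u.smooth 1) (p := 2) (p' := 6)
    one_le_two (by omega) (by rw [hE]; norm_num) (u.eLpNorm_lt_top _ μ).ne
  have h6 := eLpNorm_nnreal_pow_eq_lintegral (f := u) (μ := μ) (p := 6) (by norm_num)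
  have h2 := eLpNorm_nnreal_pow_eq_lintegral (f := fderiv ℝ u) (μ := μ) (p := 2) two_ne_zero
  rw [NNReal.coe_ofNat] at h6 h2 hsob
  rw [hE, show (2 : ℝ) * 2 + 2 = 6 by norm_num, show ((3 : ℕ) : ℝ) * 2 / 2 = 3 by norm_num,
    show (2 * (2 - ((3 : ℕ) : ℝ)) + 2) / 2 = 0 by norm_num, ENNReal.rpow_zero, mul_one, ← h2,
    ← h6, ← ENNReal.rpow_mul, ENNReal.coe_pow, ← ENNReal.rpow_natCast]
  calc eLpNorm u (6 : ℝ≥0) μ ^ (6 : ℝ)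
      ≤ (SNormLESNormFDerivOfEqConst F μ 2 * eLpNorm (fderiv ℝ u) (2 : ℝ≥0) μ) ^ (6 : ℝ) := by
        gcongr
    _ = _ := by
        rw [ENNReal.mul_rpow_of_nonneg _ _ (by norm_num)]
        norm_num

theorem gagliardoNirenbergAt_of_finrank_eq_two [InnerProductSpace ℝ F] (hE : finrank ℝ E = 2)
    {σ : ℝ} (hσ : 1 ≤ σ) :
    GagliardoNirenbergAt F μ σ
      ((SNormLESNormFDerivOfEqConst ℝ μ 1 * (σ + 1).toNNReal) ^ (2 * σ)) := by
  intro u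
  have hσ0 : 0 < σ := by linarith
  set K : ℝ≥0∞ := ((SNormLESNormFDerivOfEqConst ℝ μ 1 : ℝ≥0∞) * ENNReal.ofReal (σ + 1)) ^ (2 : ℝ)
  set X := ∫⁻ x, ‖u x‖ₑ ^ (2 * σ + 2) ∂μ
  set J := ∫⁻ x, ‖u x‖ₑ ^ (2 : ℝ) ∂μ
  set G := ∫⁻ x, ‖fderiv ℝ u x‖ₑ ^ (2 : ℝ) ∂μ
  have hmid : ∫⁻ x, ‖u x‖ₑ ^ (2 * (σ + 1 - 1)) ∂μ ≤ X ^ ((σ - 1) / σ) * J ^ σ⁻¹ := by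
    have h := lintegral_rpow_convex_comb_le (μ := μ) u.continuous.enorm.aemeasurable
      (a := 2 * σ + 2) (b := 2) (θ := (σ - 1) / σ) (by linarith) zero_le_two
      (div_nonneg (by linarith) hσ0.le) (div_le_one_of_le₀ (by linarith) hσ0.le)
    rwa [show (σ - 1) / σ * (2 * σ + 2) + (1 - (σ - 1) / σ) * 2 = 2 * (σ + 1 - 1) by
      field_simp; ring, show 1 - (σ - 1) / σ = σ⁻¹ by field_simp; ring] at h
  have hX : X ≤ K * J ^ σ⁻¹ * G * X ^ ((σ - 1) / σ) := calc
    X = ∫⁻ x, ‖u x‖ₑ ^ (2 * (σ + 1)) ∂μ := by simp_rw [X, mul_add, mul_one]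
    _ ≤ K * (∫⁻ x, ‖u x‖ₑ ^ (2 * (σ + 1 - 1)) ∂μ) * G :=
        lintegral_enorm_rpow_two_mul_le_of_finrank_eq_two μ hE (u.smooth 1) (by linarith)
          (u.lintegral_enorm_rpow_ne_top μ (by linarith))
    _ ≤ K * (X ^ ((σ - 1) / σ) * J ^ σ⁻¹) * G := by gcongr
    _ = K * J ^ σ⁻¹ * G * X ^ ((σ - 1) / σ) := by ring
  calc X ≤ (K * J ^ σ⁻¹ * G) ^ (1 - (σ - 1) / σ)⁻¹ :=
        ENNReal.le_rpow_of_le_mul_rpow (u.lintegral_enorm_rpow_ne_top μ (by linarith))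
          (by rw [div_lt_one hσ0]; linarith) hX
    _ = _ := by
        rw [show (1 - (σ - 1) / σ)⁻¹ = σ by field_simp; ring, hE,
          show ((2 : ℕ) : ℝ) * σ / 2 = σ by push_cast; ring,
          show (σ * (2 - ((2 : ℕ) : ℝ)) + 2) / 2 = 1 by push_cast; ring, ENNReal.rpow_one,
          ENNReal.coe_rpow_of_nonneg _ (by positivity), ENNReal.mul_rpow_of_nonneg _ _ hσ0.le,
          ENNReal.mul_rpow_of_nonneg _ _ hσ0.le, ← ENNReal.rpow_mul, ← ENNReal.rpow_mul,
          inv_mul_cancel₀ hσ0.ne', ENNReal.rpow_one, ENNReal.coe_mul, ENNReal.ofReal,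
          mul_right_comm]

theorem exists_gagliardoNirenbergAt [InnerProductSpace ℝ F] [FiniteDimensional ℝ F]
    (hE : finrank ℝ E = 2 ∨ finrank ℝ E = 3) {σ : ℝ} (hσ : 0 < σ)
    (hσ3 : finrank ℝ E = 3 → σ < 2) :
    ∃ C, GagliardoNirenbergAt F μ σ C := by
  rcases hE with hE | hE
  · rcases le_or_gt 1 σ with hσ1 | hσ1
    · exact ⟨_, gagliardoNirenbergAt_of_finrank_eq_two μ hE hσ1⟩
    · exact ⟨_, (gagliardoNirenbergAt_of_finrank_eq_two μ hE le_rfl).of_le μ hσ hσ1.le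
        (by rw [hE]; norm_num)⟩
  · exact ⟨_, (gagliardoNirenbergAt_two_of_finrank_eq_three μ hE).of_le μ hσ (hσ3 hE).le
      (by rw [hE]; norm_num)⟩

theorem GagliardoNirenbergAt.integral_le [NormedSpace ℝ F] {σ : ℝ} {C : ℝ≥0}
    (h : GagliardoNirenbergAt F μ σ C) (hσ : 0 ≤ σ) (hσd : 0 ≤ σ * (2 - finrank ℝ E) + 2)
    (u : 𝓢(E, F)) :
    ∫ x, ‖u x‖ ^ (2 * σ + 2) ∂μ ≤
      C * (∫ x, ‖fderiv ℝ u x‖ ^ 2 ∂μ) ^ ((finrank ℝ E : ℝ) * σ / 2)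
        * (∫ x, ‖u x‖ ^ 2 ∂μ) ^ ((σ * (2 - finrank ℝ E) + 2) / 2) := by
  have hG : ∫⁻ x, ‖fderiv ℝ u x‖ₑ ^ (2 : ℝ) ∂μ ≠ ⊤ := by
    simpa using (SchwartzMap.fderivCLM ℝ E F u).lintegral_enorm_rpow_ne_top μ two_pos
  have hJ := u.lintegral_enorm_rpow_ne_top μ two_pos
  simp_rw [← Real.rpow_two]
  rw [integral_norm_rpow_eq_toReal_lintegral u.continuous.aestronglyMeasurable (by positivity),
    integral_norm_rpow_eq_toReal_lintegral u.continuous.aestronglyMeasurable zero_le_two,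
    integral_norm_rpow_eq_toReal_lintegral
      ((u.smooth 1).continuous_fderiv one_ne_zero).aestronglyMeasurable zero_le_two,
    ENNReal.toReal_rpow, ENNReal.toReal_rpow, ← ENNReal.coe_toReal, ← ENNReal.toReal_mul,
    ← ENNReal.toReal_mul]
  exact ENNReal.toReal_mono (by finiteness) (h u)

end GagliardoNirenberg

theorem gagliardo_nirenberg (d : ℕ) (hd : d = 2 ∨ d = 3) (σ : ℝ) (hσ : 0 < σ)
    (hσ3 : d = 3 → σ < 2) :
    ∃ C : ℝ, 0 < C ∧ ∀ u : SchwartzMap (EuclideanSpace ℝ (Fin d)) ℂ,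
      (∫ x, ‖u x‖ ^ (2 * σ + 2)) ≤
        C * (∫ x, ‖fderiv ℝ (⇑u) x‖ ^ 2) ^ ((d : ℝ) * σ / 2)
          * (∫ x, ‖u x‖ ^ 2) ^ ((σ * (2 - (d : ℝ)) + 2) / 2) := by
  obtain ⟨C, hC⟩ := exists_gagliardoNirenbergAt (F := ℂ)
    (volume : Measure (EuclideanSpace ℝ (Fin d))) (by simpa using hd) hσ (by simpa using hσ3)
  have hσd : 0 ≤ σ * (2 - (d : ℝ)) + 2 := by
    rcases hd with rfl | rfl
    · norm_num
    · have := hσ3 rfl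
      norm_num
      linarith
  refine ⟨C + 1, by positivity, fun u => ?_⟩
  have h := hC.integral_le _ hσ.le (by simpa using hσd) u
  rw [finrank_euclideanSpace_fin] at h
  refine h.trans ?_
  gcongr
  linarith
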